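/- Let F be a twist of H and F⁻¹ the corresponding twist of H^F. Then the deformation map D_{F⁻¹} associated with the twist F⁻¹ of H^F equals the inverse of D_F: D_{F⁻¹}(P) = D_F⁻¹(P) for all P, where D_F(P) = (f̄^α ▶ P) f̄_α. In particular χ_F := S^F(f^β)f_β = χ. -/

import Mathlib

open TensorProduct

noncomputable section

variable (K : Type*) [CommRing K] (H : Type*) [Ring H] [HopfAlgebra K H]

namespace TwistPaper

def muH : H ⊗[K] H →ₗ[K] H := LinearMap.mul' K H
def ΔH : H →ₗ[K] H ⊗[K] H := Coalgebra.comul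
def εH : H →ₗ[K] K := Coalgebra.counit
def SH : H →ₗ[K] H := HopfAlgebra.antipode (R := K)

def ins3 : H ⊗[K] H →ₗ[K] H ⊗[K] (H ⊗[K] H) :=
  LinearMap.lTensor H ((TensorProduct.mk K H H).flip 1)
def ins1 : H ⊗[K] H →ₗ[K] H ⊗[K] (H ⊗[K] H) :=
  TensorProduct.mk K H (H ⊗[K] H) 1
def comulLeft : H ⊗[K] H →ₗ[K] H ⊗[K] (H ⊗[K] H) :=
  (TensorProduct.assoc K H H H).toLinearMap ∘ₗ (ΔH K H).rTensor H
def comulRight : H ⊗[K] H →ₗ[K] H ⊗[K] (H ⊗[K] H) :=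
  (ΔH K H).lTensor H
def counitLeft : H ⊗[K] H →ₗ[K] H :=
  (TensorProduct.lid K H).toLinearMap ∘ₗ (εH K H).rTensor H
def counitRight : H ⊗[K] H →ₗ[K] H :=
  (TensorProduct.rid K H).toLinearMap ∘ₗ (εH K H).lTensor H

/-- `F` is a twist of the Hopf algebra `H` with inverse `Finv`. -/
structure IsTwist (F Finv : H ⊗[K] H) : Prop where
  mul_inv : F * Finv = 1
  inv_mul : Finv * F = 1
  cocycle : ins3 K H F * comulLeft K H F = ins1 K H F * comulRight K H F
  counit_left : counitLeft K H F = 1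
  counit_right : counitRight K H F = 1

/-- The twisted coproduct `Δ^F(ξ) = F Δ(ξ) F⁻¹`. -/
def twistComul (F Finv : H ⊗[K] H) : H →ₗ[K] H ⊗[K] H :=
  LinearMap.mulLeft K F ∘ₗ LinearMap.mulRight K Finv ∘ₗ ΔH K H

/-- `χ = f^α S(f_α)`. -/
def chi (F : H ⊗[K] H) : H := muH K H ((SH K H).lTensor H F)
/-- `χ⁻¹ = S(f̄^α) f̄_α`. -/
def chiInv (Finv : H ⊗[K] H) : H := muH K H ((SH K H).rTensor H Finv)

/-- The twisted antipode `S^F(ξ) = χ S(ξ) χ⁻¹`. -/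
def twistAntipode (F Finv : H ⊗[K] H) : H →ₗ[K] H :=
  LinearMap.mulLeft K (chi K H F) ∘ₗ LinearMap.mulRight K (chiInv K H Finv) ∘ₗ SH K H

/-- `sw x f g c v w = Σ c (f x¹ v) (g x² w)` for `x = Σ x¹ ⊗ x²`. -/
def sw {V W V' W' Z : Type*}
    [AddCommGroup V] [Module K V] [AddCommGroup W] [Module K W]
    [AddCommGroup V'] [Module K V'] [AddCommGroup W'] [Module K W']
    [AddCommGroup Z] [Module K Z]
    (x : H ⊗[K] H) (f : H →ₗ[K] V →ₗ[K] V') (g : H →ₗ[K] W →ₗ[K] W')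
    (c : V' →ₗ[K] W' →ₗ[K] Z) : V →ₗ[K] W →ₗ[K] Z :=
  ((TensorProduct.mapBilinear (RingHom.id K) H H V' W').compr₂
      (TensorProduct.lift c ∘ₗ LinearMap.applyₗ (R := K) x)).compl₁₂ f.flip g.flip

/-- `ρ` is a left `H`-module structure. -/
def IsHAction {V : Type*} [AddCommGroup V] [Module K V] (ρ : H →ₗ[K] V →ₗ[K] V) : Prop :=
  (∀ ξ ζ : H, ∀ v : V, ρ (ξ * ζ) v = ρ ξ (ρ ζ v)) ∧ (∀ v : V, ρ 1 v = v)

variable {M : Type*} [AddCommGroup M] [Module K M]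

/-- `twistEnd F1 F2 (η ⊗ ζ) = F1 η ∘ₗ F2 ζ` as an operator on `M`. -/
def twistEnd (F1 F2 : H →ₗ[K] M →ₗ[K] M) : H ⊗[K] H →ₗ[K] M →ₗ[K] M :=
  TensorProduct.lift ((LinearMap.llcomp K M M M ∘ₗ F1).compl₂ F2)

/-- `𝔸` (with product `m`) is an `(H,μ)`-bimodule (left action `L`, right action `Rm`)
satisfying the generalized associativity conditions
`(PQ)ξ = P(Qξ)`, `(Pξ)Q = P(ξQ)`, `ξ(PQ) = (ξP)Q`. -/
structure IsHBimoduleAlgebra (m : M →ₗ[K] M →ₗ[K] M) (L Rm : H →ₗ[K] M →ₗ[K] M) : Prop where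
  left_mul : ∀ (ξ ζ : H) (P : M), L (ξ * ζ) P = L ξ (L ζ P)
  left_one : ∀ P : M, L 1 P = P
  right_mul : ∀ (ξ ζ : H) (P : M), Rm (ξ * ζ) P = Rm ζ (Rm ξ P)
  right_one : ∀ P : M, Rm 1 P = P
  commute : ∀ (ξ ζ : H) (P : M), L ξ (Rm ζ P) = Rm ζ (L ξ P)
  assoc1 : ∀ (ξ : H) (P Q : M), Rm ξ (m P Q) = m P (Rm ξ Q)
  assoc2 : ∀ (ξ : H) (P Q : M), m (Rm ξ P) Q = m P (L ξ Q)
  assoc3 : ∀ (ξ : H) (P Q : M), L ξ (m P Q) = m (L ξ P) Q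

/-- The `H`-adjoint action `ξ ▶ P = ξ₁ P S(ξ₂)`. -/
def adjAct (L Rm : H →ₗ[K] M →ₗ[K] M) : H →ₗ[K] M →ₗ[K] M :=
  twistEnd K H L (Rm ∘ₗ SH K H) ∘ₗ ΔH K H

/-- The deformation map `D_F(P) = (f̄^α ▶ P) f̄_α`. -/
def DF (Finv : H ⊗[K] H) (L Rm : H →ₗ[K] M →ₗ[K] M) : M →ₗ[K] M :=
  twistEnd K H Rm (adjAct K H L Rm) (TensorProduct.comm K H H Finv)

/-- The star product `P ⋆ Q = (f̄^α ▶ P)(f̄_α ▶ Q)` on `𝔸`. -/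
def starAlg (Finv : H ⊗[K] H) (m : M →ₗ[K] M →ₗ[K] M) (L Rm : H →ₗ[K] M →ₗ[K] M) :
    M →ₗ[K] M →ₗ[K] M :=
  sw K H Finv (adjAct K H L Rm) (adjAct K H L Rm) m


/-- The `H^F`-adjoint action `ξ ▶_F P = ξ_{1_F} P S^F(ξ_{2_F})`. -/
def adjActF (F Finv : H ⊗[K] H) (L Rm : H →ₗ[K] M →ₗ[K] M) : H →ₗ[K] M →ₗ[K] M :=
  twistEnd K H L (Rm ∘ₗ twistAntipode K H F Finv) ∘ₗ twistComul K H F Finv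

/-- The deformation map `D_{F⁻¹}(P) = (f^β ▶_F P) f_β` associated with the twist
`F⁻¹` of `H^F`. -/
def DFinv (F Finv : H ⊗[K] H) (L Rm : H →ₗ[K] M →ₗ[K] M) : M →ₗ[K] M :=
  twistEnd K H Rm (adjActF K H F Finv L Rm) (TensorProduct.comm K H H F)

/-!
`L` and `Rm` make `M` a module over `H ⊗ Hᵐᵒᵖ`, and both deformation maps are actions of explicit
elements: contracting the cocycle condition with the antipode turns `(Δ ⊗ id)F⁻¹` and `(Δ^F ⊗ id)F`
into `D_F = f^α ⊗ S(f_α) χ⁻¹` and `D_{F⁻¹} = f̄^α ⊗ χ S(f̄_α)`, where `χ⁻¹ = S(f̄^α) f̄_α`.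
Since `S` is an antihomomorphism, the two products of these elements in `H ⊗ Hᵐᵒᵖ` are
`(id ⊗ S)(F⁻¹F)` with `χ⁻¹ χ` inserted, and `(id ⊗ S)(FF⁻¹)` conjugated by `χ`; so both are `1` once
`χ⁻¹` is a two-sided inverse of `χ`. Multiplying out the closed form of `D_F` gives `χ χ⁻¹ = ε(F⁻¹) = 1`;
`χ⁻¹ χ = 1` comes from applying `x ⊗ y ⊗ z ↦ S(x) y S(z)` to the rearranged cocycle condition
`(Δ ⊗ id)F · (id ⊗ Δ)F⁻¹ = (F⁻¹ ⊗ 1)(1 ⊗ F)`. Finally `χ_F = χ S(f^α) χ⁻¹ f_α = χ`, because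
`S(f^α) χ⁻¹ f_α = S(f̄^β f^α) f̄_β f_α = 1`.
-/

open Algebra.TensorProduct (includeLeft includeRight)
open MulOpposite (op unop)

lemma comulLeft_apply (X : H ⊗[K] H) :
    comulLeft K H X = TensorProduct.assoc K H H H ((ΔH K H).rTensor H X) := rfl

lemma comulRight_tmul (x y : H) : comulRight K H (x ⊗ₜ y) = x ⊗ₜ ΔH K H y := rfl

lemma counitLeft_tmul (x y : H) : counitLeft K H (x ⊗ₜ y) = εH K H x • y := rfl

lemma counitRight_tmul (x y : H) : counitRight K H (x ⊗ₜ y) = εH K H y • x := rfl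

lemma coe_ins1 : ⇑(ins1 K H) = ⇑(includeRight : H ⊗[K] H →ₐ[K] H ⊗[K] (H ⊗[K] H)) := rfl

lemma coe_ins3 :
    ⇑(ins3 K H) = ⇑((Algebra.TensorProduct.assoc K K K H H H).toAlgHom.comp includeLeft) := by
  ext X
  induction X using TensorProduct.induction_on <;> simp_all [ins3, add_tmul]

lemma coe_comulLeft : ⇑(comulLeft K H) = ⇑((Algebra.TensorProduct.assoc K K K H H H).toAlgHom.comp
    (Algebra.TensorProduct.map (Bialgebra.comulAlgHom K H) (AlgHom.id K H))) := by
  ext; rfl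

lemma coe_comulRight : ⇑(comulRight K H) =
    ⇑(Algebra.TensorProduct.map (AlgHom.id K H) (Bialgebra.comulAlgHom K H)) := by
  ext; rfl

lemma coe_counitLeft : ⇑(counitLeft K H) = ⇑((Algebra.TensorProduct.lid K H).toAlgHom.comp
    (Algebra.TensorProduct.map (Bialgebra.counitAlgHom K H) (AlgHom.id K H))) := by
  ext; rfl

lemma coe_counitRight : ⇑(counitRight K H) = ⇑((Algebra.TensorProduct.rid K K H).toAlgHom.comp
    (Algebra.TensorProduct.map (AlgHom.id K H) (Bialgebra.counitAlgHom K H))) := by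
  ext; rfl

theorem mul_inv_rev_eq_of_mul_eq_mul {G : Type*} [Monoid G] {a b c d a' b' c' d' : G}
    (ha : a' * a = 1) (hb : b' * b = 1) (hc : c * c' = 1) (hd : d * d' = 1)
    (h : a * b = c * d) : b' * a' = d' * c' :=
  left_inv_eq_right_inv (a := a * b) (by rw [mul_assoc, ← mul_assoc a', ha, one_mul, hb])
    (by rw [h, mul_assoc, ← mul_assoc d, hd, one_mul, hc])

lemma assoc_rTensor_twistComul (F Finv W : H ⊗[K] H) :
    TensorProduct.assoc K H H H ((twistComul K H F Finv).rTensor H W) =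
      ins3 K H F * comulLeft K H W * ins3 K H Finv := by
  induction W using TensorProduct.induction_on with
  | zero => simp
  | tmul x y =>
    have h : twistComul K H F Finv x ⊗ₜ[K] y =
        includeLeft (S := K) F * (ΔH K H x ⊗ₜ[K] y) * includeLeft (S := K) Finv := by
      simp [twistComul, Algebra.TensorProduct.tmul_mul_tmul, mul_assoc]
    rw [LinearMap.rTensor_tmul, h, coe_ins3, coe_comulLeft]
    change Algebra.TensorProduct.assoc K K K H H H _ = _
    simp only [map_mul, AlgHom.comp_apply]
    rfl
  | add s t hs ht => simp only [map_add, add_mul, mul_add, hs, ht]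

lemma SH_one : SH K H 1 = 1 := HopfAlgebra.antipode_one

lemma SH_mul (x y : H) : SH K H (x * y) = SH K H y * SH K H x :=
  HopfAlgebra.antipode_mul_antidistrib x y

def mulRTensor (T : H →ₗ[K] H) : H ⊗[K] H →ₗ[K] H := muH K H ∘ₗ T.rTensor H

def mulLTensor (T : H →ₗ[K] H) : H ⊗[K] H →ₗ[K] H := muH K H ∘ₗ T.lTensor H

lemma chiInv_eq_mulRTensor (X : H ⊗[K] H) : chiInv K H X = mulRTensor K H (SH K H) X := rfl

lemma chi_eq_mulLTensor (X : H ⊗[K] H) : chi K H X = mulLTensor K H (SH K H) X := rfl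

@[simp] lemma mulRTensor_tmul (T : H →ₗ[K] H) (x y : H) :
    mulRTensor K H T (x ⊗ₜ[K] y) = T x * y := rfl

@[simp] lemma mulLTensor_tmul (T : H →ₗ[K] H) (x y : H) :
    mulLTensor K H T (x ⊗ₜ[K] y) = x * T y := rfl

lemma mulRTensor_one (T : H →ₗ[K] H) : mulRTensor K H T 1 = T 1 := by
  simp [Algebra.TensorProduct.one_def]

lemma mulRTensor_SH_comul (x : H) :
    mulRTensor K H (SH K H) (ΔH K H x) = algebraMap K H (εH K H x) :=
  HopfAlgebra.mul_antipode_rTensor_comul_apply x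

lemma mulLTensor_SH_comul (x : H) :
    mulLTensor K H (SH K H) (ΔH K H x) = algebraMap K H (εH K H x) :=
  HopfAlgebra.mul_antipode_lTensor_comul_apply x

lemma mulRTensor_SH_mul_tmul (X : H ⊗[K] H) (w w' : H) :
    mulRTensor K H (SH K H) (X * w ⊗ₜ[K] w') = SH K H w * mulRTensor K H (SH K H) X * w' := by
  induction X using TensorProduct.induction_on with
  | zero => simp
  | tmul x x' => simp [Algebra.TensorProduct.tmul_mul_tmul, SH_mul, mul_assoc]
  | add s t hs ht => simp only [add_mul, map_add, hs, ht, mul_add]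

lemma mulRTensor_SH_comul_mul (x : H) (W : H ⊗[K] H) :
    mulRTensor K H (SH K H) (ΔH K H x * W) = εH K H x • mulRTensor K H (SH K H) W := by
  induction W using TensorProduct.induction_on with
  | zero => simp
  | tmul w w' =>
    rw [mulRTensor_SH_mul_tmul, mulRTensor_SH_comul]
    simp [Algebra.smul_def, mul_assoc, Algebra.commutes]
  | add s t hs ht => simp only [mul_add, map_add, smul_add, hs, ht]

lemma mulRTensor_SH_mul_of_eq_one {X : H ⊗[K] H} (hX : mulRTensor K H (SH K H) X = 1)
    (W : H ⊗[K] H) : mulRTensor K H (SH K H) (X * W) = mulRTensor K H (SH K H) W := by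
  induction W using TensorProduct.induction_on with
  | zero => simp
  | tmul w w' => rw [mulRTensor_SH_mul_tmul, hX, mul_one, mulRTensor_tmul]
  | add s t hs ht => simp only [mul_add, map_add, hs, ht]

lemma mulRTensor_SH_one_tmul_mul (Y X : H ⊗[K] H) :
    mulRTensor K H (SH K H) ((1 ⊗ₜ[K] mulRTensor K H (SH K H) Y) * X) =
      mulRTensor K H (SH K H) (Y * X) := by
  induction X using TensorProduct.induction_on with
  | zero => simp
  | tmul x x' =>
    rw [Algebra.TensorProduct.tmul_mul_tmul, one_mul, mulRTensor_tmul, mulRTensor_SH_mul_tmul,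
      mul_assoc]
  | add s t hs ht => simp only [mul_add, map_add, hs, ht]

lemma mulRTensor_twistAntipode (F Finv X : H ⊗[K] H) :
    mulRTensor K H (twistAntipode K H F Finv) X =
      chi K H F * mulRTensor K H (SH K H) ((1 ⊗ₜ[K] chiInv K H Finv) * X) := by
  induction X using TensorProduct.induction_on with
  | zero => simp
  | tmul x x' => simp [twistAntipode, Algebra.TensorProduct.tmul_mul_tmul, mul_assoc]
  | add s t hs ht => simp only [mul_add, map_add, hs, ht]

lemma lTensor_mulRTensor_comulRight_mul (A : H ⊗[K] H) (Y : H ⊗[K] (H ⊗[K] H)) :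
    (mulRTensor K H (SH K H)).lTensor H (comulRight K H A * Y) =
      (counitRight K H A ⊗ₜ[K] 1) * (mulRTensor K H (SH K H)).lTensor H Y := by
  induction A using TensorProduct.induction_on with
  | zero => simp
  | tmul a a' =>
    induction Y using TensorProduct.induction_on with
    | zero => simp
    | tmul y Y' =>
      simp [comulRight_tmul, counitRight_tmul, Algebra.TensorProduct.tmul_mul_tmul,
        mulRTensor_SH_comul_mul, TensorProduct.smul_tmul']
    | add s t hs ht => simp only [mul_add, map_add, hs, ht]
  | add s t hs ht => simp only [add_mul, map_add, add_tmul, hs, ht]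

lemma lTensor_mulRTensor_ins1_mul_ins3 (B C : H ⊗[K] H) :
    (mulRTensor K H (SH K H)).lTensor H (ins1 K H B * ins3 K H C) =
      (SH K H).lTensor H C * (1 ⊗ₜ[K] mulRTensor K H (SH K H) B) := by
  induction C using TensorProduct.induction_on with
  | zero => simp
  | tmul c c' => simp [ins1, ins3, Algebra.TensorProduct.tmul_mul_tmul, mulRTensor_SH_mul_tmul]
  | add s t hs ht => simp only [mul_add, add_mul, map_add, hs, ht]

lemma lTensor_mulRTensor_ins3 (C : H ⊗[K] H) :
    (mulRTensor K H (SH K H)).lTensor H (ins3 K H C) = (SH K H).lTensor H C := by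
  induction C using TensorProduct.induction_on with
  | zero => simp
  | tmul c c' => simp [ins3]
  | add s t hs ht => simp only [map_add, hs, ht]

lemma muH_mul_one_tmul (X : H ⊗[K] H) (a : H) :
    muH K H (X * (1 ⊗ₜ[K] a)) = muH K H X * a := by
  induction X using TensorProduct.induction_on with
  | zero => simp
  | tmul x x' => simp [muH, Algebra.TensorProduct.tmul_mul_tmul, mul_assoc]
  | add s t hs ht => simp only [add_mul, map_add, hs, ht]

lemma muH_lTensor_mulRTensor_comulLeft (B : H ⊗[K] H) :
    muH K H ((mulRTensor K H (SH K H)).lTensor H (comulLeft K H B)) = counitLeft K H B := by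
  have assoc_tmul (W : H ⊗[K] H) (b' : H) :
      muH K H ((mulRTensor K H (SH K H)).lTensor H (TensorProduct.assoc K H H H (W ⊗ₜ b'))) =
        mulLTensor K H (SH K H) W * b' := by
    induction W using TensorProduct.induction_on with
    | zero => simp
    | tmul w w' => simp [muH, mul_assoc]
    | add s t hs ht => simp only [add_tmul, add_mul, map_add, hs, ht]
  induction B using TensorProduct.induction_on with
  | zero => simp
  | tmul b b' =>
    rw [comulLeft_apply, LinearMap.rTensor_tmul, assoc_tmul, mulLTensor_SH_comul, counitLeft_tmul,
      Algebra.smul_def]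
  | add s t hs ht => simp only [map_add, hs, ht]

def outerAntipodeMul : H ⊗[K] (H ⊗[K] H) →ₗ[K] H :=
  muH K H ∘ₗ TensorProduct.map (SH K H) (mulLTensor K H (SH K H))

@[simp] lemma outerAntipodeMul_tmul (x : H) (Y : H ⊗[K] H) :
    outerAntipodeMul K H (x ⊗ₜ Y) = SH K H x * mulLTensor K H (SH K H) Y := rfl

lemma outerAntipodeMul_ins3_mul_ins1 (X Y : H ⊗[K] H) :
    outerAntipodeMul K H (ins3 K H Y * ins1 K H X) = chiInv K H Y * chi K H X := by
  rw [chiInv_eq_mulRTensor, chi_eq_mulLTensor]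
  induction X using TensorProduct.induction_on with
  | zero => simp
  | tmul x x' =>
    induction Y using TensorProduct.induction_on with
    | zero => simp
    | tmul y y' => simp [ins1, ins3, Algebra.TensorProduct.tmul_mul_tmul, mul_assoc]
    | add s t hs ht => simp only [add_mul, map_add, hs, ht]
  | add s t hs ht => simp only [mul_add, map_add, hs, ht]

lemma outerAntipodeMul_assoc_mul (W W' : H ⊗[K] H) (a' b : H) :
    outerAntipodeMul K H (TensorProduct.assoc K H H H (W ⊗ₜ a') * (b ⊗ₜ W')) =
      SH K H b * mulRTensor K H (SH K H) W * mulLTensor K H (SH K H) W' * SH K H a' := by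
  induction W using TensorProduct.induction_on with
  | zero => simp
  | tmul w₁ w₂ =>
    induction W' using TensorProduct.induction_on with
    | zero => simp
    | tmul u₁ u₂ => simp [Algebra.TensorProduct.tmul_mul_tmul, SH_mul, mul_assoc]
    | add s t hs ht => simp only [tmul_add, mul_add, add_mul, map_add, hs, ht]
  | add s t hs ht => simp only [add_tmul, add_mul, mul_add, map_add, hs, ht]

lemma outerAntipodeMul_comulLeft_mul_comulRight (A B : H ⊗[K] H) :
    outerAntipodeMul K H (comulLeft K H A * comulRight K H B) =
      SH K H (counitLeft K H A * counitRight K H B) := by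
  induction A using TensorProduct.induction_on with
  | zero => simp
  | tmul a a' =>
    induction B using TensorProduct.induction_on with
    | zero => simp
    | tmul b b' =>
      rw [comulLeft_apply, LinearMap.rTensor_tmul, comulRight_tmul, outerAntipodeMul_assoc_mul,
        mulRTensor_SH_comul, mulLTensor_SH_comul, counitLeft_tmul, counitRight_tmul,
        smul_mul_smul_comm, map_smul, SH_mul]
      simp only [Algebra.algebraMap_eq_smul_one, mul_smul_comm, smul_mul_assoc, mul_one, smul_smul,
        mul_comm]
    | add s t hs ht => simp only [mul_add, map_add, hs, ht]
  | add s t hs ht => simp only [add_mul, map_add, hs, ht]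

abbrev antipodeOpRight : H ⊗[K] H →ₐ[K] H ⊗[K] Hᵐᵒᵖ :=
  Algebra.TensorProduct.map (AlgHom.id K H) (HopfAlgebra.antipodeAlgHomOp K H)

abbrev opRight : H ⊗[K] H →ₗ[K] H ⊗[K] Hᵐᵒᵖ :=
  (MulOpposite.opLinearEquiv K : H ≃ₗ[K] Hᵐᵒᵖ).toLinearMap.lTensor H

lemma opRight_lTensor_SH_mul_one_tmul (X : H ⊗[K] H) (a : H) :
    opRight K H ((SH K H).lTensor H X * (1 ⊗ₜ a)) = (1 ⊗ₜ op a) * antipodeOpRight K H X := by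
  induction X using TensorProduct.induction_on with
  | zero => simp
  | tmul x x' => simp [Algebra.TensorProduct.tmul_mul_tmul, SH]
  | add s t hs ht => simp only [add_mul, mul_add, map_add, hs, ht]

lemma opRight_one_tmul_mul_lTensor_SH (X : H ⊗[K] H) (a : H) :
    opRight K H ((1 ⊗ₜ a) * (SH K H).lTensor H X) = antipodeOpRight K H X * (1 ⊗ₜ op a) := by
  induction X using TensorProduct.induction_on with
  | zero => simp
  | tmul x x' => simp [Algebra.TensorProduct.tmul_mul_tmul, SH]
  | add s t hs ht => simp only [add_mul, mul_add, map_add, hs, ht]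

lemma one_tmul_op_mul_one_tmul_op {a b : H} (h : b * a = 1) :
    ((1 : H) ⊗ₜ[K] op a) * (1 ⊗ₜ op b) = 1 := by
  rw [Algebra.TensorProduct.tmul_mul_tmul, one_mul, ← MulOpposite.op_mul, h, MulOpposite.op_one,
    Algebra.TensorProduct.one_def]

def elemDF (F Finv : H ⊗[K] H) : H ⊗[K] Hᵐᵒᵖ :=
  (1 ⊗ₜ op (chiInv K H Finv)) * antipodeOpRight K H F

def elemDFinv (F Finv : H ⊗[K] H) : H ⊗[K] Hᵐᵒᵖ :=
  antipodeOpRight K H Finv * (1 ⊗ₜ op (chi K H F))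

section Action

variable {K H} {m : M →ₗ[K] M →ₗ[K] M} {L Rm : H →ₗ[K] M →ₗ[K] M}

def IsHBimoduleAlgebra.act (h𝔸 : IsHBimoduleAlgebra K H m L Rm) :
    H ⊗[K] Hᵐᵒᵖ →ₐ[K] Module.End K M :=
  Algebra.TensorProduct.lift
    (AlgHom.ofLinearMap L (LinearMap.ext h𝔸.left_one) fun ξ ζ => LinearMap.ext (h𝔸.left_mul ξ ζ))
    (AlgHom.ofLinearMap (Rm ∘ₗ (MulOpposite.opLinearEquiv K).symm.toLinearMap)
      (LinearMap.ext h𝔸.right_one) fun ξ ζ => LinearMap.ext (h𝔸.right_mul (unop ζ) (unop ξ)))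
    fun ξ ζ => LinearMap.ext fun P => h𝔸.commute ξ (unop ζ) P

lemma IsHBimoduleAlgebra.twistEnd_eq_act (h𝔸 : IsHBimoduleAlgebra K H m L Rm) (X : H ⊗[K] H) :
    twistEnd K H L Rm X = h𝔸.act (opRight K H X) := by
  induction X using TensorProduct.induction_on with
  | zero => simp
  | tmul x y => rfl
  | add s t hs ht => simp only [map_add, hs, ht]

lemma IsHBimoduleAlgebra.comp_twistEnd (h𝔸 : IsHBimoduleAlgebra K H m L Rm) (T : H →ₗ[K] H)
    (W : H ⊗[K] H) (y : H) :
    Rm y ∘ₗ twistEnd K H L (Rm ∘ₗ T) W =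
      twistEnd K H L Rm ((mulRTensor K H T).lTensor H (TensorProduct.assoc K H H H (W ⊗ₜ y))) := by
  induction W using TensorProduct.induction_on with
  | zero => simp
  | tmul w w' =>
    ext P
    simp [twistEnd, h𝔸.right_mul, h𝔸.commute]
  | add s t hs ht => simp only [map_add, add_tmul, LinearMap.comp_add, hs, ht]

lemma IsHBimoduleAlgebra.twistEnd_comm (h𝔸 : IsHBimoduleAlgebra K H m L Rm)
    (T : H →ₗ[K] H) (δ : H →ₗ[K] H ⊗[K] H) (G : H ⊗[K] H) :
    twistEnd K H Rm (twistEnd K H L (Rm ∘ₗ T) ∘ₗ δ) (TensorProduct.comm K H H G) =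
      twistEnd K H L Rm ((mulRTensor K H T).lTensor H
        (TensorProduct.assoc K H H H (δ.rTensor H G))) := by
  induction G using TensorProduct.induction_on with
  | zero => simp
  | tmul x y => exact h𝔸.comp_twistEnd T (δ x) y
  | add s t hs ht => simp only [map_add, hs, ht]

end Action

namespace IsTwist

variable {K H} {F Finv : H ⊗[K] H}

section

variable {A : Type*} [Semiring A] [Algebra K A] (φ : H ⊗[K] H →ₐ[K] A)

theorem map_mul_map_inv (hF : IsTwist K H F Finv) : φ F * φ Finv = 1 := by
  rw [← map_mul, hF.mul_inv, map_one]

theorem map_inv_mul_map (hF : IsTwist K H F Finv) : φ Finv * φ F = 1 := by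
  rw [← map_mul, hF.inv_mul, map_one]

end

theorem counitLeft_inv (hF : IsTwist K H F Finv) : counitLeft K H Finv = 1 := by
  have h := hF.map_mul_map_inv ((Algebra.TensorProduct.lid K H).toAlgHom.comp
    (Algebra.TensorProduct.map (Bialgebra.counitAlgHom K H) (AlgHom.id K H)))
  rwa [← coe_counitLeft, hF.counit_left, one_mul] at h

theorem counitRight_inv (hF : IsTwist K H F Finv) : counitRight K H Finv = 1 := by
  have h := hF.map_mul_map_inv ((Algebra.TensorProduct.rid K K H).toAlgHom.comp
    (Algebra.TensorProduct.map (AlgHom.id K H) (Bialgebra.counitAlgHom K H)))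
  rwa [← coe_counitRight, hF.counit_right, one_mul] at h

theorem inv_cocycle (hF : IsTwist K H F Finv) :
    comulLeft K H Finv * ins3 K H Finv = comulRight K H Finv * ins1 K H Finv := by
  have h := hF.cocycle
  rw [coe_ins3, coe_comulLeft, coe_ins1, coe_comulRight] at h ⊢
  exact mul_inv_rev_eq_of_mul_eq_mul (hF.map_inv_mul_map _) (hF.map_inv_mul_map _)
    (hF.map_mul_map_inv _) (hF.map_mul_map_inv _) h

theorem ins3_inv_mul (hF : IsTwist K H F Finv) : ins3 K H Finv * ins3 K H F = 1 := by
  rw [coe_ins3]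
  exact hF.map_inv_mul_map _

theorem comulLeft_inv_eq (hF : IsTwist K H F Finv) :
    comulLeft K H Finv = comulRight K H Finv * (ins1 K H Finv * ins3 K H F) := by
  rw [← mul_assoc, ← hF.inv_cocycle, mul_assoc, hF.ins3_inv_mul, mul_one]

theorem comulLeft_mul_comulRight_inv (hF : IsTwist K H F Finv) :
    comulLeft K H F * comulRight K H Finv = ins3 K H Finv * ins1 K H F := by
  have hR : comulRight K H F * comulRight K H Finv = 1 := by
    rw [coe_comulRight]
    exact hF.map_mul_map_inv _
  calc comulLeft K H F * comulRight K H Finv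
      = ins3 K H Finv * (ins3 K H F * comulLeft K H F) * comulRight K H Finv := by
        rw [← mul_assoc, hF.ins3_inv_mul, one_mul]
    _ = ins3 K H Finv * ins1 K H F := by rw [hF.cocycle, mul_assoc, mul_assoc, hR, mul_one]

theorem mulRTensor_SH_one_tmul_chiInv_mul (hF : IsTwist K H F Finv) :
    mulRTensor K H (SH K H) ((1 ⊗ₜ[K] chiInv K H Finv) * F) = 1 := by
  rw [chiInv_eq_mulRTensor, mulRTensor_SH_one_tmul_mul, hF.inv_mul, mulRTensor_one, SH_one]

theorem mulRTensor_twistAntipode_mul (hF : IsTwist K H F Finv) (W : H ⊗[K] H) :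
    mulRTensor K H (twistAntipode K H F Finv) (F * W) = chi K H F * mulRTensor K H (SH K H) W := by
  rw [mulRTensor_twistAntipode, ← mul_assoc,
    mulRTensor_SH_mul_of_eq_one K H hF.mulRTensor_SH_one_tmul_chiInv_mul]

theorem mulRTensor_twistAntipode_self (hF : IsTwist K H F Finv) :
    mulRTensor K H (twistAntipode K H F Finv) F = chi K H F := by
  simpa [mulRTensor_one, SH_one] using hF.mulRTensor_twistAntipode_mul 1

theorem lTensor_mulRTensor_twistAntipode_ins1_mul (hF : IsTwist K H F Finv)
    (Y : H ⊗[K] (H ⊗[K] H)) :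
    (mulRTensor K H (twistAntipode K H F Finv)).lTensor H (ins1 K H F * Y) =
      (1 ⊗ₜ[K] chi K H F) * (mulRTensor K H (SH K H)).lTensor H Y := by
  induction Y using TensorProduct.induction_on with
  | zero => simp
  | tmul y Y' => simp [ins1, Algebra.TensorProduct.tmul_mul_tmul, hF.mulRTensor_twistAntipode_mul]
  | add s t hs ht => simp only [mul_add, map_add, hs, ht]

theorem lTensor_mulRTensor_comulLeft_inv (hF : IsTwist K H F Finv) :
    (mulRTensor K H (SH K H)).lTensor H (comulLeft K H Finv) =
      (SH K H).lTensor H F * (1 ⊗ₜ[K] chiInv K H Finv) := by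
  rw [hF.comulLeft_inv_eq, lTensor_mulRTensor_comulRight_mul, hF.counitRight_inv,
    ← Algebra.TensorProduct.one_def, one_mul, lTensor_mulRTensor_ins1_mul_ins3,
    chiInv_eq_mulRTensor]

theorem lTensor_mulRTensor_twistComulLeft (hF : IsTwist K H F Finv) :
    (mulRTensor K H (twistAntipode K H F Finv)).lTensor H
        (TensorProduct.assoc K H H H ((twistComul K H F Finv).rTensor H F)) =
      (1 ⊗ₜ[K] chi K H F) * (SH K H).lTensor H Finv := by
  rw [assoc_rTensor_twistComul, hF.cocycle, mul_assoc,
    hF.lTensor_mulRTensor_twistAntipode_ins1_mul, lTensor_mulRTensor_comulRight_mul,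
    hF.counit_right, ← Algebra.TensorProduct.one_def, one_mul, lTensor_mulRTensor_ins3]

theorem chi_mul_chiInv (hF : IsTwist K H F Finv) : chi K H F * chiInv K H Finv = 1 := by
  have h := congrArg (muH K H) hF.lTensor_mulRTensor_comulLeft_inv
  rw [muH_lTensor_mulRTensor_comulLeft, hF.counitLeft_inv, muH_mul_one_tmul] at h
  exact h.symm

theorem chiInv_mul_chi (hF : IsTwist K H F Finv) : chiInv K H Finv * chi K H F = 1 := by
  rw [← outerAntipodeMul_ins3_mul_ins1, ← hF.comulLeft_mul_comulRight_inv, outerAntipodeMul_comulLeft_mul_comulRight, hF.counit_left,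
    hF.counitRight_inv, one_mul, SH_one]

theorem elemDFinv_mul_elemDF (hF : IsTwist K H F Finv) :
    elemDFinv K H F Finv * elemDF K H F Finv = 1 := by
  rw [elemDFinv, elemDF, mul_assoc, ← mul_assoc (1 ⊗ₜ _),
    one_tmul_op_mul_one_tmul_op K H hF.chiInv_mul_chi, one_mul, ← map_mul, hF.inv_mul, map_one]

theorem elemDF_mul_elemDFinv (hF : IsTwist K H F Finv) :
    elemDF K H F Finv * elemDFinv K H F Finv = 1 := by
  rw [elemDFinv, elemDF, mul_assoc, ← mul_assoc (antipodeOpRight K H F), ← map_mul, hF.mul_inv,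
    map_one, one_mul, one_tmul_op_mul_one_tmul_op K H hF.chi_mul_chiInv]

variable {m : M →ₗ[K] M →ₗ[K] M} {L Rm : H →ₗ[K] M →ₗ[K] M}

theorem DF_eq_act (hF : IsTwist K H F Finv) (h𝔸 : IsHBimoduleAlgebra K H m L Rm) :
    DF K H Finv L Rm = h𝔸.act (elemDF K H F Finv) := by
  rw [DF, adjAct, h𝔸.twistEnd_comm, h𝔸.twistEnd_eq_act, ← comulLeft_apply,
    hF.lTensor_mulRTensor_comulLeft_inv, opRight_lTensor_SH_mul_one_tmul]
  rfl

theorem DFinv_eq_act (hF : IsTwist K H F Finv) (h𝔸 : IsHBimoduleAlgebra K H m L Rm) :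
    DFinv K H F Finv L Rm = h𝔸.act (elemDFinv K H F Finv) := by
  rw [DFinv, adjActF, h𝔸.twistEnd_comm, h𝔸.twistEnd_eq_act, hF.lTensor_mulRTensor_twistComulLeft,
    opRight_one_tmul_mul_lTensor_SH]
  rfl

end IsTwist

/-- the deformation map `D_{F⁻¹}` associated with the twist `F⁻¹`
of `H^F` is the inverse of `D_F`; in particular `χ_F = S^F(f^β) f_β = χ`. -/
theorem DFinv_is_inverse_of_DF (F Finv : H ⊗[K] H) (hF : IsTwist K H F Finv)
    (m : M →ₗ[K] M →ₗ[K] M) (L Rm : H →ₗ[K] M →ₗ[K] M)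
    (h𝔸 : IsHBimoduleAlgebra K H m L Rm) :
    (∀ P : M, DFinv K H F Finv L Rm (DF K H Finv L Rm P) = P)
    ∧ (∀ P : M, DF K H Finv L Rm (DFinv K H F Finv L Rm P) = P)
    ∧ muH K H ((twistAntipode K H F Finv).rTensor H F) = chi K H F := by
  refine ⟨fun P => ?_, fun P => ?_, hF.mulRTensor_twistAntipode_self⟩
  · rw [hF.DF_eq_act h𝔸, hF.DFinv_eq_act h𝔸, ← Module.End.mul_apply, ← map_mul,
      hF.elemDFinv_mul_elemDF, map_one, Module.End.one_apply]
  · rw [hF.DF_eq_act h𝔸, hF.DFinv_eq_act h𝔸, ← Module.End.mul_apply, ← map_mul,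
      hF.elemDF_mul_elemDFinv, map_one, Module.End.one_apply]

end TwistPaper
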